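/- Let n, r ≥ 0 and s ≥ 1 be integers. For each j with 0 ≤ j ≤ s−1, the boundary quadrature weight λ_{n+1}^{(j)} attached to the j-th derivative at the right endpoint b is strictly positive: λ_{n+1}^{(j)} > 0. -/

import Mathlib

open MeasureTheory

/-- The generalized Gauss–Radau/Gauss–Lobatto quadrature
`Q_{n,r,s}(f) = Σ_{j<r} λ₀^{(j)} f^{(j)}(a) + Σ_{j<n} λ_j f(τ_j) + Σ_{j<s} (-1)^j λ_{n+1}^{(j)} f^{(j)}(b)`,
where derivatives are taken within `[a,b]`. -/
noncomputable def quad (a b : ℝ) (n r s : ℕ) (τ w0 wi w1 : ℕ → ℝ) (f : ℝ → ℝ) : ℝ :=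
  (∑ j ∈ Finset.range r, w0 j * iteratedDerivWithin j f (Set.Icc a b) a)
  + (∑ j ∈ Finset.range n, wi j * f (τ j))
  + (∑ j ∈ Finset.range s, (-1 : ℝ) ^ j * w1 j * iteratedDerivWithin j f (Set.Icc a b) b)

open Polynomial
open scoped PowerSeries Nat

/-!
Test the quadrature on `p(t) = q(b - t)`, where `q(u) = u ^ j R(u) G(u)` with
`G(u) = (b - a - u) ^ r ∏ᵢ (b - τᵢ - u) ^ 2` and `R` the truncation at order `s - 1 - j` of the
power series of `1 / G`. Then `R G ≡ 1` modulo `u ^ (s - j)`, so among the first `s` Taylor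
coefficients of `q` at `0` only the `j`-th survives, and `G` kills the other terms of the
quadrature; the degree of `p` is at most `2n + r + s - 1`, so exactness gives
`j! λ_{n+1}^{(j)} = ∫ p dμ`. Each factor `1 / (β - u)`, `β > 0`, has positive Taylor
coefficients, hence so do `1 / G` and `R`, so `p ≥ 0` on `[a, b]`; as `p ≠ 0` and `μ` charges
neighbourhoods of infinitely many points, `∫ p dμ > 0`.
-/

namespace PowerSeries

variable {R : Type*} [CommSemiring R] [PartialOrder R] [IsOrderedRing R]

theorem coeff_mul_nonneg {f g : R⟦X⟧} (hf : ∀ k, 0 ≤ coeff k f) (hg : ∀ k, 0 ≤ coeff k g)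
    (k : ℕ) : 0 ≤ coeff k (f * g) := by
  rw [coeff_mul]
  exact Finset.sum_nonneg fun i _ => mul_nonneg (hf _) (hg _)

theorem coeff_invUnitsSub_nonneg {K : Type*} [Field K] [LinearOrder K] [IsStrictOrderedRing K]
    {u : Kˣ} (hu : 0 < (u : K)) (k : ℕ) : 0 ≤ coeff k (invUnitsSub u) := by
  rw [coeff_invUnitsSub, one_divp, Units.val_inv_eq_inv_val, Units.val_pow_eq_pow_val]
  positivity

end PowerSeries

namespace Polynomial

theorem natDegree_C_sub_X {R : Type*} [Ring R] [Nontrivial R] (c : R) :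
    (C c - X : R[X]).natDegree = 1 := by
  rw [← neg_sub, natDegree_neg, natDegree_X_sub_C]

theorem iterate_derivative_comp_C_sub_X {R : Type*} [CommRing R] (p : R[X]) (c : R) (k : ℕ) :
    derivative^[k] (p.comp (C c - X)) = (-1) ^ k * (derivative^[k] p).comp (C c - X) := by
  induction k generalizing p with
  | zero => simp
  | succ k ih => simp [ih (derivative p), derivative_comp, pow_succ]

theorem eval_zero_iterate_derivative {R : Type*} [CommSemiring R] (p : R[X]) (k : ℕ) :
    (derivative^[k] p).eval 0 = k ! * p.coeff k := by
  rw [← coeff_zero_eq_eval_zero, coeff_iterate_derivative, zero_add, Nat.descFactorial_self,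
    nsmul_eq_mul]

theorem eval_iterate_derivative_comp_C_sub_X_self {R : Type*} [CommRing R] (p : R[X]) (c : R)
    (k : ℕ) : (derivative^[k] (p.comp (C c - X))).eval c = (-1) ^ k * k ! * p.coeff k := by
  rw [iterate_derivative_comp_C_sub_X, eval_mul, eval_comp]
  simp [eval_zero_iterate_derivative, mul_assoc]

theorem eval_iterate_derivative_eq_zero_of_X_sub_C_pow_dvd {R : Type*} [CommRing R] {p : R[X]}
    {a : R} {r k : ℕ} (h : (X - C a) ^ r ∣ p) (hk : k < r) : (derivative^[k] p).eval a = 0 :=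
  dvd_iff_isRoot.1 <| (dvd_pow_self _ (Nat.sub_ne_zero_of_lt hk)).trans <|
    pow_sub_dvd_iterate_derivative_of_pow_dvd k h

theorem iteratedDeriv_eval {𝕜 : Type*} [NontriviallyNormedField 𝕜] (p : 𝕜[X]) (k : ℕ) :
    iteratedDeriv k (fun x => p.eval x) = fun x => (derivative^[k] p).eval x := by
  induction k generalizing p with
  | zero => simp
  | succ k ih =>
    have hderiv : deriv (fun x => p.eval x) = fun x => p.derivative.eval x :=
      _root_.funext fun _ => Polynomial.deriv p
    rw [iteratedDeriv_succ', hderiv, ih, Function.iterate_succ_apply]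

theorem iteratedDerivWithin_eval {𝕜 : Type*} [NontriviallyNormedField 𝕜] {s : Set 𝕜}
    (hs : UniqueDiffOn 𝕜 s) {x : 𝕜} (hx : x ∈ s) (p : 𝕜[X]) (k : ℕ) :
    iteratedDerivWithin k (fun x => p.eval x) s x = (derivative^[k] p).eval x := by
  have hp : ContDiffAt 𝕜 k (fun x => p.eval x) x := by
    simpa using (contDiff_aeval p k).contDiffAt (x := x)
  rw [iteratedDerivWithin_eq_iteratedDeriv hs hp hx, iteratedDeriv_eval]

variable {K : Type*} [Field K] [LinearOrder K] [IsStrictOrderedRing K]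

def nonnegInvSeries : Submonoid K[X] where
  carrier := {G | ∃ H : K⟦X⟧, (∀ k, 0 ≤ PowerSeries.coeff k H) ∧ H * G = 1}
  one_mem' := ⟨1, fun k => by rw [PowerSeries.coeff_one]; split <;> simp, by simp⟩
  mul_mem' := by
    rintro G₁ G₂ ⟨H₁, hH₁, hG₁⟩ ⟨H₂, hH₂, hG₂⟩
    exact ⟨H₁ * H₂, PowerSeries.coeff_mul_nonneg hH₁ hH₂, by
      rw [coe_mul, mul_mul_mul_comm, hG₁, hG₂, one_mul]⟩

theorem C_sub_X_mem_nonnegInvSeries {β : K} (hβ : 0 < β) : C β - X ∈ nonnegInvSeries := by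
  let u := Units.mk0 β hβ.ne'
  refine ⟨PowerSeries.invUnitsSub u, PowerSeries.coeff_invUnitsSub_nonneg (u := u) hβ, ?_⟩
  simpa [u] using PowerSeries.invUnitsSub_mul_sub u

theorem exists_nonneg_inv_modulo_X_pow {G : K[X]} (hG : G ∈ nonnegInvSeries) (m : ℕ) :
    ∃ R : K[X], R.natDegree ≤ m ∧ (∀ u, 0 ≤ u → 0 ≤ R.eval u) ∧
      ∀ k ≤ m, (R * G).coeff k = if k = 0 then 1 else 0 := by
  obtain ⟨H, hH, hHG⟩ := hG
  refine ⟨PowerSeries.trunc (m + 1) H, Nat.lt_succ_iff.1 (PowerSeries.natDegree_trunc_lt H m),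
    fun u hu => ?_, fun k hk => ?_⟩
  · rw [eval_eq_sum_range]
    refine Finset.sum_nonneg fun i _ => mul_nonneg ?_ (pow_nonneg hu i)
    rw [PowerSeries.coeff_trunc]
    split <;> simp [hH]
  · rw [← coeff_coe, coe_mul, ← PowerSeries.coeff_coe_trunc_of_lt (Nat.lt_succ_of_le hk),
      PowerSeries.trunc_trunc_mul, PowerSeries.coeff_coe_trunc_of_lt (Nat.lt_succ_of_le hk),
      hHG, PowerSeries.coeff_one]

theorem exists_reflected_quadrature_test_polynomial {L : K} (hL : 0 < L) {n : ℕ} {β : ℕ → K}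
    (hβ : ∀ i < n, 0 < β i) (r : ℕ) {j s : ℕ} (hj : j < s) :
    ∃ q : K[X], q.natDegree + 1 ≤ 2 * n + r + s ∧ (∀ u ∈ Set.Icc 0 L, 0 ≤ q.eval u) ∧
      (∀ i < n, q.eval (β i) = 0) ∧ (C L - X) ^ r ∣ q ∧
      ∀ k < s, q.coeff k = if k = j then 1 else 0 := by
  set G : K[X] := (C L - X) ^ r * ∏ i ∈ Finset.range n, (C (β i) - X) ^ 2 with hG_def
  have hG : G ∈ nonnegInvSeries :=
    mul_mem (pow_mem (C_sub_X_mem_nonnegInvSeries hL) r) <| prod_mem fun i hi =>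
      pow_mem (C_sub_X_mem_nonnegInvSeries (hβ i (Finset.mem_range.1 hi))) 2
  obtain ⟨R, hR_deg, hR_nonneg, hRG⟩ := exists_nonneg_inv_modulo_X_pow hG (s - 1 - j)
  have hprod_deg : (∏ i ∈ Finset.range n, (C (β i) - X) ^ 2).natDegree ≤ 2 * n := by
    refine (natDegree_prod_le _ _).trans <|
      (Finset.sum_le_card_nsmul _ _ 2 fun i _ => ?_).trans (by simp [mul_comm])
    simpa using natDegree_pow_le_of_le 2 (natDegree_C_sub_X (β i)).le
  have hprod_dvd : (∏ i ∈ Finset.range n, (C (β i) - X) ^ 2) ∣ G := dvd_mul_left _ _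
  have hG_deg : G.natDegree ≤ r * 1 + 2 * n :=
    natDegree_mul_le_of_le (natDegree_pow_le_of_le r (natDegree_C_sub_X L).le) hprod_deg
  refine ⟨X ^ j * R * G, ?_, fun u hu => ?_, fun i hi => ?_,
    (dvd_mul_right _ _).trans (dvd_mul_left G _), fun k hk => ?_⟩
  · have := natDegree_mul_le_of_le (natDegree_mul_le_of_le (natDegree_X_pow_le j) hR_deg) hG_deg
    omega
  · have hG_nonneg : 0 ≤ G.eval u := by
      simp only [hG_def, eval_mul, eval_pow, eval_sub, eval_C, eval_X, eval_prod]
      exact mul_nonneg (pow_nonneg (sub_nonneg.2 hu.2) r)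
        (Finset.prod_nonneg fun i _ => sq_nonneg _)
    simp only [eval_mul, eval_pow, eval_X]
    exact mul_nonneg (mul_nonneg (pow_nonneg hu.1 j) (hR_nonneg u hu.1)) hG_nonneg
  · refine dvd_iff_isRoot.1 ?_
    rw [← neg_sub, neg_dvd]
    exact (dvd_pow_self _ two_ne_zero).trans <|
      (Finset.dvd_prod_of_mem (fun i => (C (β i) - X) ^ 2) (Finset.mem_range.2 hi)).trans <|
        hprod_dvd.trans (dvd_mul_left G _)
  · rw [mul_assoc, coeff_X_pow_mul']
    split_ifs with hjk hkj hkj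
    · subst hkj; simpa using hRG 0 (Nat.zero_le _)
    · rw [hRG (k - j) (by omega), if_neg (by omega)]
    · omega
    · rfl

theorem exists_quadrature_test_polynomial {a b : K} (hab : a < b) {n : ℕ} {τ : ℕ → K}
    (hτ : ∀ i < n, τ i < b) (r : ℕ) {j s : ℕ} (hj : j < s) :
    ∃ p : K[X], p ≠ 0 ∧ p.natDegree + 1 ≤ 2 * n + r + s ∧ (∀ t ∈ Set.Icc a b, 0 ≤ p.eval t) ∧
      (∀ i < n, p.eval (τ i) = 0) ∧ (∀ k < r, (derivative^[k] p).eval a = 0) ∧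
      ∀ k < s, (derivative^[k] p).eval b = if k = j then (-1 : K) ^ j * j ! else 0 := by
  obtain ⟨q, hq_deg, hq_nonneg, hq_root, hq_dvd, hq_coeff⟩ :=
    exists_reflected_quadrature_test_polynomial (sub_pos.2 hab) (β := fun i => b - τ i)
      (fun i hi => sub_pos.2 (hτ i hi)) r hj
  have hb : ∀ k < s, (derivative^[k] (q.comp (C b - X))).eval b =
      if k = j then (-1 : K) ^ j * j ! else 0 := by
    intro k hk
    rw [eval_iterate_derivative_comp_C_sub_X_self, hq_coeff k hk]
    split_ifs with hkj <;> simp [hkj]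
  have ha : (X - C a) ^ r ∣ q.comp (C b - X) := by
    obtain ⟨g, hg⟩ := hq_dvd
    exact ⟨g.comp (C b - X), by simp [hg, C_sub]⟩
  refine ⟨q.comp (C b - X), fun h0 => ?_, ?_, fun t ht => ?_, fun i hi => ?_,
    fun k hk => eval_iterate_derivative_eq_zero_of_X_sub_C_pow_dvd ha hk, hb⟩
  · simpa [h0, Nat.factorial_ne_zero] using hb j hj
  · have := natDegree_comp_le (p := q) (q := C b - X)
    rw [natDegree_C_sub_X, mul_one] at this
    omega
  · simpa using hq_nonneg (b - t) ⟨sub_nonneg.2 ht.2, by linarith [ht.1]⟩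
  · simpa using hq_root i hi

end Polynomial

theorem integral_pos_of_nonneg_on_of_pos_at {μ : Measure ℝ} [IsFiniteMeasureOnCompacts μ]
    {K : Set ℝ} (hK : IsCompact K) (hμK : μ Kᶜ = 0) {f : ℝ → ℝ} (hf : Continuous f)
    (hf_nonneg : ∀ t ∈ K, 0 ≤ f t) {x : ℝ} (hx : ∀ ε > 0, 0 < μ (Set.Ioo (x - ε) (x + ε)))
    (hfx : 0 < f x) : 0 < ∫ t, f t ∂μ := by
  have hae : ∀ᵐ t ∂μ, t ∈ K := ae_iff.2 hμK
  have hint : Integrable f μ := by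
    rw [← Measure.restrict_eq_self_of_ae_mem hae]
    exact hf.continuousOn.integrableOn_compact hK
  obtain ⟨ε, hε, hball⟩ := Metric.isOpen_iff.1 (isOpen_lt continuous_const hf) x hfx
  rw [integral_pos_iff_support_of_nonneg_ae (hae.mono hf_nonneg) hint]
  refine (hx ε hε).trans_le (measure_mono ?_)
  rw [← Real.ball_eq_Ioo]
  exact fun y hy => (hball hy).ne'

theorem quad_polynomial_eq_of_vanishing {a b : ℝ} (hab : a < b) {n r s j : ℕ} {τ : ℕ → ℝ}
    (w0 wi w1 : ℕ → ℝ) {p : ℝ[X]} (ha : ∀ k < r, (derivative^[k] p).eval a = 0)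
    (hτ : ∀ i < n, p.eval (τ i) = 0) (hb : ∀ k < s, k ≠ j → (derivative^[k] p).eval b = 0)
    (hj : j < s) :
    quad a b n r s τ w0 wi w1 (fun t => p.eval t) =
      (-1) ^ j * w1 j * (derivative^[j] p).eval b := by
  have hIcc := uniqueDiffOn_Icc hab
  have hbIcc : b ∈ Set.Icc a b := Set.right_mem_Icc.2 hab.le
  unfold quad
  rw [Finset.sum_eq_zero fun k hk => ?_, Finset.sum_eq_zero fun i hi => ?_,
    Finset.sum_eq_single_of_mem j (Finset.mem_range.2 hj) fun k hk hkj => ?_,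
    iteratedDerivWithin_eval hIcc hbIcc, zero_add, zero_add]
  · rw [iteratedDerivWithin_eval hIcc hbIcc, hb k (Finset.mem_range.1 hk) hkj, mul_zero]
  · exact mul_eq_zero_of_right _ (hτ i (Finset.mem_range.1 hi))
  · rw [iteratedDerivWithin_eval hIcc (Set.left_mem_Icc.2 hab.le), ha k (Finset.mem_range.1 hk),
      mul_zero]

theorem right_boundary_weights_pos_general
    (a b : ℝ) (hab : a < b)
    (μ : Measure ℝ) [IsFiniteMeasure μ]
    (hsupp : μ (Set.Icc a b)ᶜ = 0)
    (hinf : {x | x ∈ Set.Ioo a b ∧ ∀ ε > 0, 0 < μ (Set.Ioo (x - ε) (x + ε))}.Infinite)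
    (n r s : ℕ) (hs : 1 ≤ s)
    (τ w0 wi w1 : ℕ → ℝ)
    (hτab : ∀ j < n, τ j ∈ Set.Ioo a b)
    (hex : ∀ p : Polynomial ℝ, p.natDegree + 1 ≤ 2 * n + r + s →
      quad a b n r s τ w0 wi w1 (fun t => p.eval t) = ∫ t, p.eval t ∂μ)
    (j : ℕ) (hj : j ≤ s - 1) :
    0 < w1 j := by
  have hjs : j < s := by omega
  obtain ⟨p, hp_ne, hp_deg, hp_nonneg, hp_τ, hp_a, hp_b⟩ :=
    exists_quadrature_test_polynomial hab (fun i hi => (hτab i hi).2) r hjs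
  obtain ⟨x, ⟨hx_mem, hx_μ⟩, hx_root⟩ := (hinf.sdiff (p.finite_setOfPred_isRoot hp_ne)).nonempty
  have hintegral : 0 < ∫ t, p.eval t ∂μ :=
    integral_pos_of_nonneg_on_of_pos_at isCompact_Icc hsupp p.continuous hp_nonneg hx_μ
      ((hp_nonneg x (Set.Ioo_subset_Icc_self hx_mem)).lt_of_ne' hx_root)
  have hquad : quad a b n r s τ w0 wi w1 (fun t => p.eval t) = w1 j * j ! := by
    rw [quad_polynomial_eq_of_vanishing hab w0 wi w1 hp_a hp_τ
      (fun k hk hkj => by rw [hp_b k hk, if_neg hkj]) hjs, hp_b j hjs, if_pos rfl]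
    rw [mul_comm _ (w1 j), mul_assoc, ← mul_assoc ((-1) ^ j), ← pow_add,
      Even.neg_one_pow ⟨j, rfl⟩, one_mul]
  rw [← hex p hp_deg, hquad] at hintegral
  exact pos_of_mul_pos_left hintegral (Nat.cast_nonneg _)

/-- the boundary weights `λ_{n+1}^{(j)}`, `0 ≤ j ≤ s-1`, attached to the
derivatives at the right endpoint `b` are strictly positive. -/
theorem right_boundary_weights_pos
    (a b : ℝ) (hab : a < b)
    (μ : Measure ℝ) [IsFiniteMeasure μ]
    (hsupp : μ (Set.Icc a b)ᶜ = 0)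
    (hinf : {x | x ∈ Set.Ioo a b ∧ ∀ ε > 0, 0 < μ (Set.Ioo (x - ε) (x + ε))}.Infinite)
    (n r s : ℕ) (hs : 1 ≤ s)
    (τ w0 wi w1 : ℕ → ℝ)
    (hτab : ∀ j < n, τ j ∈ Set.Ioo a b)
    (hτmono : ∀ i j, i < j → j < n → τ i < τ j)
    (hex : ∀ p : Polynomial ℝ, p.natDegree + 1 ≤ 2 * n + r + s →
      quad a b n r s τ w0 wi w1 (fun t => p.eval t) = ∫ t, p.eval t ∂μ)
    (j : ℕ) (hj : j ≤ s - 1) :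
    0 < w1 j :=
  right_boundary_weights_pos_general a b hab μ hsupp hinf n r s hs τ w0 wi w1 hτab hex j hj
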